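/- Let G be a chordal graph, s a simplicial vertex of G, and v a vertex in N_G[s]. Then for every vertex x ∉ N_G[v], the closed neighborhood of x in G^s is contained in the closed neighborhood of v in G^s. -/

import Mathlib

/-- The closed neighborhood `N[v]` of a vertex. -/
def closedNbr {V : Type*} (G : SimpleGraph V) (v : V) : Set V := insert v (G.neighborSet v)

/-- A vertex is simplicial if its closed neighborhood is a clique. -/
def Simplicial {V : Type*} (G : SimpleGraph V) (s : V) : Prop := G.IsClique (closedNbr G s)

/-- A vertex is universal if it is adjacent to all other vertices. -/
def Universal {V : Type*} (G : SimpleGraph V) (v : V) : Prop := ∀ u, u ≠ v → G.Adj v u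

/-- The auxiliary graph `G^s` with respect to a simplicial vertex `s`. -/
def auxGraph {V : Type*} (G : SimpleGraph V) (s : V) : SimpleGraph V where
  Adj u v := u ≠ v ∧
    ((u ∉ closedNbr G s ∧ v ∉ closedNbr G s ∧ G.Adj u v) ∨
     (u ∈ closedNbr G s ∧ v ∈ closedNbr G s ∧ G.neighborSet u ∪ G.neighborSet v ≠ Set.univ) ∨
     (u ∈ closedNbr G s ∧ v ∉ closedNbr G s ∧ ¬ closedNbr G v ⊆ closedNbr G u) ∨
     (v ∈ closedNbr G s ∧ u ∉ closedNbr G s ∧ ¬ closedNbr G u ⊆ closedNbr G v))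
  symm := by
    constructor
    rintro u v ⟨hne, h⟩
    refine ⟨hne.symm, ?_⟩
    rcases h with ⟨h1, h2, h3⟩ | ⟨h1, h2, h3⟩ | h | h
    · exact Or.inl ⟨h2, h1, h3.symm⟩
    · exact Or.inr (Or.inl ⟨h2, h1, by rwa [Set.union_comm] at h3⟩)
    · exact Or.inr (Or.inr (Or.inr h))
    · exact Or.inr (Or.inr (Or.inl h))
  loopless := ⟨fun v h => h.1 rfl⟩

/-- A witness of an edge `uv` of `G^s`: a vertex `w ∉ N_G[s]` such that for each end `x`,
`w` is adjacent to `x` in `G` iff `x ∉ N_G[s]`. -/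
def EdgeWitness {V : Type*} (G : SimpleGraph V) (s u v w : V) : Prop :=
  w ∉ closedNbr G s ∧ (G.Adj w u ↔ u ∉ closedNbr G s) ∧ (G.Adj w v ↔ v ∉ closedNbr G s)

/-- An edge of `G^s` is collateral if it is an edge of `G` and one end is in `N_G[s]`. -/
def Collateral {V : Type*} (G : SimpleGraph V) (s u v : V) : Prop :=
  (auxGraph G s).Adj u v ∧ G.Adj u v ∧ (u ∈ closedNbr G s ∨ v ∈ closedNbr G s)

/-- A witness of a clique `K` of `G^s`: a vertex `w ∉ N_G[s]` such that `N_G[w] ∩ K` and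
`N_G[s] ∩ K` partition `K`. -/
def CliqueWitness {V : Type*} (G : SimpleGraph V) (s : V) (K : Set V) (w : V) : Prop :=
  w ∉ closedNbr G s ∧ ∀ x ∈ K, (x ∈ closedNbr G w ↔ x ∉ closedNbr G s)

/-- A graph is chordal if it has no induced cycle of length at least four. -/
def Chordal {V : Type*} (G : SimpleGraph V) : Prop :=
  ¬ ∃ (n : ℕ) (f : ZMod n → V), 4 ≤ n ∧ Function.Injective f ∧
      ∀ i j : ZMod n, G.Adj (f i) (f j) ↔ (j = i + 1 ∨ i = j + 1)

/-! Since `s` is simplicial, `N_G[s] ⊆ N_G[v]`, so `x ∉ N_G[s]`, and most cases of the inclusion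
are read off the definition of `G^s`. The one that is not is a neighbour `u ∈ N_G[s]` of `x`
in `G^s`, i.e. with a vertex `y ∈ N_G[x] \ N_G[u]`. If `N_G(v) ∪ N_G(u)` were all of `V`, then
`x ∈ N_G(u)`, `y ∈ N_G(v)`, and `v y x u` would be an induced 4-cycle of `G`. -/

section

variable {V : Type*} {G : SimpleGraph V} {s u v x : V}

lemma mem_closedNbr_iff : u ∈ closedNbr G v ↔ u = v ∨ G.Adj v u := Set.mem_insert_iff

lemma self_mem_closedNbr : v ∈ closedNbr G v := Set.mem_insert v _

lemma mem_closedNbr_of_adj (h : G.Adj v u) : u ∈ closedNbr G v := Set.mem_insert_of_mem v h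

lemma Chordal.adj_or_adj_of_cycle_four (hG : Chordal G) {a b c d : V}
    (hab : G.Adj a b) (hbc : G.Adj b c) (hcd : G.Adj c d) (hda : G.Adj d a)
    (hac : a ≠ c) (hbd : b ≠ d) : G.Adj a c ∨ G.Adj b d := by
  by_contra! h
  have hcases : ∀ i : ZMod 4, i = 0 ∨ i = 1 ∨ i = 2 ∨ i = 3 := by decide
  refine hG ⟨4, ![a, b, c, d], le_rfl, fun i j hij => ?_, fun i j => ?_⟩ <;>
    rcases hcases i with rfl | rfl | rfl | rfl <;> rcases hcases j with rfl | rfl | rfl | rfl <;>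
    simp_all [G.ne_of_adj, eq_comm, G.adj_comm] <;> decide

lemma Simplicial.closedNbr_subset (hs : Simplicial G s) (hv : v ∈ closedNbr G s) :
    closedNbr G s ⊆ closedNbr G v := fun u hu =>
  (eq_or_ne v u).elim (· ▸ self_mem_closedNbr) fun hvu => mem_closedNbr_of_adj (hs hv hu hvu)

lemma ne_of_mem_closedNbr_of_notMem (hu : u ∈ closedNbr G s) (hv : v ∉ closedNbr G s) :
    u ≠ v :=
  fun h => hv (h ▸ hu)

lemma auxGraph_adj_iff_of_notMem_of_notMem (hu : u ∉ closedNbr G s) (hv : v ∉ closedNbr G s) :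
    (auxGraph G s).Adj u v ↔ G.Adj u v := by
  simpa [auxGraph, hu, hv] using G.ne_of_adj

lemma auxGraph_adj_iff_of_mem_of_mem (hu : u ∈ closedNbr G s) (hv : v ∈ closedNbr G s) :
    (auxGraph G s).Adj u v ↔ u ≠ v ∧ G.neighborSet u ∪ G.neighborSet v ≠ Set.univ := by
  simp [auxGraph, hu, hv]

lemma auxGraph_adj_iff_of_mem_of_notMem (hu : u ∈ closedNbr G s) (hv : v ∉ closedNbr G s) :
    (auxGraph G s).Adj u v ↔ ¬ closedNbr G v ⊆ closedNbr G u := by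
  simp [auxGraph, hu, hv, ne_of_mem_closedNbr_of_notMem hu hv]

lemma Chordal.neighborSet_union_ne_univ (hG : Chordal G) (huv : G.Adj u v)
    (hx : x ∉ closedNbr G v) (hxu : ¬ closedNbr G x ⊆ closedNbr G u) :
    G.neighborSet v ∪ G.neighborSet u ≠ Set.univ := by
  intro hcover
  have hcovers (w : V) : G.Adj v w ∨ G.Adj u w := Set.eq_univ_iff_forall.mp hcover w
  have hvx : ¬ G.Adj v x := fun h => hx (mem_closedNbr_of_adj h)
  have hux : G.Adj u x := (hcovers x).resolve_left hvx
  obtain ⟨y, hyx, hyu⟩ := Set.not_subset.mp hxu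
  have huy : ¬ G.Adj u y := fun h => hyu (mem_closedNbr_of_adj h)
  have hvy : G.Adj v y := (hcovers y).resolve_right huy
  have hxy : G.Adj x y :=
    (mem_closedNbr_iff.mp hyx).resolve_left fun h => hvx (h ▸ hvy)
  have hchord := hG.adj_or_adj_of_cycle_four hvy hxy.symm hux.symm huv
    (fun h => hx (h ▸ self_mem_closedNbr)) (fun h => hyu (h ▸ self_mem_closedNbr))
  exact hchord.elim hvx fun h => huy h.symm

end

theorem stmt_3_general {V : Type*} (G : SimpleGraph V) (s v x : V)
    (hG : Chordal G) (hs : Simplicial G s) (hv : v ∈ closedNbr G s)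
    (hx : x ∉ closedNbr G v) :
    closedNbr (auxGraph G s) x ⊆ closedNbr (auxGraph G s) v := by
  have hxs : x ∉ closedNbr G s := fun h => hx (hs.closedNbr_subset hv h)
  have hvx : (auxGraph G s).Adj v x :=
    (auxGraph_adj_iff_of_mem_of_notMem hv hxs).2 fun h => hx (h self_mem_closedNbr)
  rintro u (rfl | hxu)
  · exact mem_closedNbr_of_adj hvx
  rcases eq_or_ne u v with rfl | huv
  · exact self_mem_closedNbr
  refine mem_closedNbr_of_adj ?_
  by_cases hus : u ∈ closedNbr G s
  · have hxu_nsub := (auxGraph_adj_iff_of_mem_of_notMem hus hxs).1 hxu.symm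
    exact (auxGraph_adj_iff_of_mem_of_mem hv hus).2
      ⟨huv.symm, hG.neighborSet_union_ne_univ (hs hus hv huv) hx hxu_nsub⟩
  · have hGxu := (auxGraph_adj_iff_of_notMem_of_notMem hxs hus).1 hxu
    exact (auxGraph_adj_iff_of_mem_of_notMem hv hus).2
      fun h => hx (h (mem_closedNbr_of_adj hGxu.symm))

/-- For a chordal graph G with simplicial vertex s, a vertex v ∈ N_G[s], and
x ∉ N_G[v], the closed neighborhood of x in G^s is contained in that of v in G^s. -/
theorem stmt_3 {V : Type*} [Fintype V] (G : SimpleGraph V) (s v x : V)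
    (hG : Chordal G) (hs : Simplicial G s) (hv : v ∈ closedNbr G s)
    (hx : x ∉ closedNbr G v) :
    closedNbr (auxGraph G s) x ⊆ closedNbr (auxGraph G s) v :=
  stmt_3_general G s v x hG hs hv hx
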